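/- With the notation of the previous setup ($0 = r_1 < r_2 < \cdots$, $\mathcal{W}_m$, $X_p$, $\Psi$), the homomorphism $\Psi$ preserves essential norms up to constants: $\frac{1}{2m+1}\|T\|_e \le \|\Psi(T)\|_e \le (2m+1)\|T\|_e$ for all $T \in \mathcal{W}_m$ and $m \in \mathbb{N}$, where $\|\cdot\|_e$ denotes the distance to the compact operators (on $\ell^2$ and on $X_p$ respectively). -/

import Mathlib

open scoped ENNReal
noncomputable section
namespace Paper

instance : Fact ((1:ℝ≥0∞) ≤ 2) := ⟨one_le_two⟩

section lpMaps
variable {E : ℕ → Type*} [∀ i, NormedAddCommGroup (E i)] [∀ i, NormedSpace ℂ (E i)]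

/-- Canonical coordinate projection `Q i` from the `ℓᵖ`-direct sum onto `E i`. -/
def lpProj (p : ℝ≥0∞) [Fact (1 ≤ p)] (i : ℕ) : lp E p →L[ℂ] E i :=
  LinearMap.mkContinuous
    { toFun := fun f => f i
      map_add' := fun f g => rfl
      map_smul' := fun c f => rfl }
    1 fun f => by
      have h1 : (1:ℝ≥0∞) ≤ p := Fact.out
      have hp0 : p ≠ 0 := by intro h; rw [h] at h1; simp at h1
      simp only [one_mul]
      exact lp.norm_apply_le_norm hp0 f i

/-- Canonical inclusion `J i` of `E i` into the `ℓᵖ`-direct sum. -/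
def lpIncl (p : ℝ≥0∞) [Fact (1 ≤ p)] (hp : p ≠ ⊤) (i : ℕ) : E i →L[ℂ] lp E p :=
  LinearMap.mkContinuous
    { toFun := fun a => lp.single p i a
      map_add' := fun a b => by
        apply lp.ext; funext j
        by_cases h : j = i
        · subst h
          simp [lp.single_apply_self, lp.coeFn_add]
        · simp [lp.single_apply_ne p i _ h, lp.coeFn_add]
      map_smul' := fun c a => lp.single_smul p i c a }
    1 fun a => by
      have h1 : (1:ℝ≥0∞) ≤ p := Fact.out
      have hp0 : p ≠ 0 := by intro h; rw [h] at h1; simp at h1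
      have hpt : 0 < p.toReal := ENNReal.toReal_pos hp0 hp
      have := lp.norm_single (E := E) (lt_of_lt_of_le zero_lt_one h1) i a
      exact le_of_eq (by simpa using this)

end lpMaps

section Fredholm
variable {X Y : Type*} [NormedAddCommGroup X] [NormedSpace ℂ X]
  [NormedAddCommGroup Y] [NormedSpace ℂ Y]

/-- A bounded operator is Fredholm if its kernel is finite dimensional and its range has
finite codimension. -/
def IsFredholm (T : X →L[ℂ] Y) : Prop :=
  FiniteDimensional ℂ (LinearMap.ker (T : X →ₗ[ℂ] Y)) ∧ FiniteDimensional ℂ (Y ⧸ LinearMap.range (T : X →ₗ[ℂ] Y))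

/-- The Fredholm index `dim ker T - codim ran T`. -/
def fredholmIndex (T : X →L[ℂ] Y) : ℤ :=
  (Module.finrank ℂ (LinearMap.ker (T : X →ₗ[ℂ] Y)) : ℤ) - (Module.finrank ℂ (Y ⧸ LinearMap.range (T : X →ₗ[ℂ] Y)) : ℤ)

/-- The essential norm: the distance to the compact operators. -/
def essNorm (T : X →L[ℂ] Y) : ℝ :=
  ⨅ K : {K : X →L[ℂ] Y // IsCompactOperator ⇑K}, ‖T - (K : X →L[ℂ] Y)‖

end Fredholm

/-- The canonical projection of `ℓ²` onto the coordinates in `[r k, r (k+1))`. -/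
def blockProj (r : ℕ → ℕ) (k : ℕ) :
    lp (fun _ : ℕ => ℂ) 2 →L[ℂ] lp (fun _ : ℕ => ℂ) 2 :=
  ∑ i ∈ Finset.Ico (r k) (r (k+1)),
    (lpIncl (E := fun _ : ℕ => ℂ) 2 (by norm_num) i).comp (lpProj 2 i)


/-- `ℓ²(ℕ)`. -/
abbrev L2 := lp (fun _ : ℕ => ℂ) 2

/-- `ℓᵖ(ℕ)`. -/
abbrev Lp (p : ℝ≥0∞) := lp (fun _ : ℕ => ℂ) p

/-- The blocks `ℓ²([r k, r (k+1)))` as abstract finite dimensional Hilbert spaces. -/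
abbrev Eb (r : ℕ → ℕ) : ℕ → Type := fun k => EuclideanSpace ℂ (Fin (r (k+1) - r k))

end Paper

/-!
Both inequalities are instances of one comparison: if `S` on `ℓ^q(E)` has bandwidth `m` and the
same block matrix as `S'` on `ℓ^{q'}(E)` with `1 < q' < ∞`, then `‖S‖ₑ ≤ (2m+1) ‖S'‖ₑ`.

Deleting the first `N` block columns of `S` is a compact perturbation, and by Hölder's inequality
a banded operator has norm at most `2m+1` times the supremum of its block norms. On the other
side, a compact `K` on `ℓ^{q'}(E)` satisfies `‖K J_j‖ → 0`: unit vectors in distinct summands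
have Cesàro means of norm `n^{1/q'} / n → 0`, so `K` maps them to a null sequence. Hence the
blocks of `S'` in far-out columns have norm at most `‖S'‖ₑ + ε`, and these are the blocks of `S`.
-/

open Filter Topology Finset

lemma one_le_toReal_of_ne_top {q : ℝ≥0∞} [Fact (1 ≤ q)] (hq : q ≠ ⊤) : 1 ≤ q.toReal := by
  simpa using ENNReal.toReal_mono hq (Fact.out : 1 ≤ q)

lemma toReal_pos_of_ne_top {q : ℝ≥0∞} [Fact (1 ≤ q)] (hq : q ≠ ⊤) : 0 < q.toReal :=
  zero_lt_one.trans_le (one_le_toReal_of_ne_top hq)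

lemma card_Icc_sub_add_le (i m : ℕ) : #(Icc (i - m) (i + m)) ≤ 2 * m + 1 := by
  rw [Nat.card_Icc]
  omega

/-- Each `j` lies in at most `2m+1` of the windows `[i-m, i+m]`. -/
lemma sum_sum_Icc_sub_add_le {a : ℕ → ℝ} (ha : ∀ j, 0 ≤ a j) (F : Finset ℕ) (m : ℕ) :
    ∑ i ∈ F, ∑ j ∈ Icc (i - m) (i + m), a j ≤
      (2 * m + 1) * ∑ j ∈ F.biUnion (fun i => Icc (i - m) (i + m)), a j := by
  rw [sum_comm' (s' := fun j => F.filter (fun i => j ∈ Icc (i - m) (i + m)))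
    (t' := F.biUnion (fun i => Icc (i - m) (i + m)))
    (fun i j => by simp only [mem_filter, mem_biUnion]; exact ⟨fun h => ⟨h, i, h⟩, And.left⟩),
    mul_sum]
  refine sum_le_sum fun j _ => ?_
  rw [sum_const, nsmul_eq_mul]
  refine mul_le_mul_of_nonneg_right ?_ (ha j)
  have hsub : F.filter (fun i => j ∈ Icc (i - m) (i + m)) ⊆ Icc (j - m) (j + m) := by
    intro i hi
    simp only [mem_filter, mem_Icc] at hi ⊢
    omega
  exact_mod_cast (card_le_card hsub).trans (card_Icc_sub_add_le j m)

section CompactOperators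

variable {X Y : Type*} [NormedAddCommGroup X] [NormedSpace ℂ X]
  [NormedAddCommGroup Y] [NormedSpace ℂ Y]

lemma exists_norm_le_one_opNorm_le_two_mul (A : X →L[ℂ] Y) :
    ∃ x : X, ‖x‖ ≤ 1 ∧ ‖A‖ ≤ 2 * ‖A x‖ := by
  rcases (norm_nonneg A).eq_or_lt with hA | hA
  · exact ⟨0, by simp, by rw [← hA]; positivity⟩
  · obtain ⟨x, hx, hAx⟩ := A.exists_lt_apply_of_lt_opNorm (half_lt_self hA)
    exact ⟨x, hx.le, by linarith⟩

/-- A limit point `w` of the image of a subsequence is also the limit of the images of its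
Cesàro means, which is `0`. -/
theorem IsCompactOperator.tendsto_zero_of_cesaro {K : X →L[ℂ] Y} (hK : IsCompactOperator K)
    {u : ℕ → X} {C : ℝ} (hu : ∀ n, ‖u n‖ ≤ C)
    (hmean : ∀ φ : ℕ → ℕ, StrictMono φ →
      Tendsto (fun n : ℕ => (n⁻¹ : ℝ) • ∑ i ∈ range n, u (φ i)) atTop (𝓝 0)) :
    Tendsto (fun n => K (u n)) atTop (𝓝 0) := by
  obtain ⟨L, hL, hKL⟩ := hK.image_closedBall_subset_compact (f := (K : X →ₗ[ℂ] Y)) C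
  refine tendsto_of_subseq_tendsto fun ns hns => ?_
  obtain ⟨φ, -, hφ⟩ := strictMono_subseq_of_tendsto_atTop hns
  have hmem : ∀ n, K (u (ns (φ n))) ∈ L := fun n =>
    hKL ⟨u (ns (φ n)), mem_closedBall_zero_iff.2 (hu _), rfl⟩
  obtain ⟨w, -, ψ, hψ, hw⟩ := hL.tendsto_subseq hmem
  have hmean_K : Tendsto (fun n : ℕ => (n⁻¹ : ℝ) • ∑ i ∈ range n, K (u (ns (φ (ψ i)))))
      atTop (𝓝 0) := by
    simpa [Function.comp_def, K.map_smul_of_tower] using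
      (K.continuous.tendsto 0).comp (hmean _ (hφ.comp hψ))
  exact ⟨φ ∘ ψ, tendsto_nhds_unique hw.cesaro_smul hmean_K ▸ hw⟩

end CompactOperators

section Singles

variable {α : Type*} [DecidableEq α] {F : α → Type*} [∀ a, NormedAddCommGroup (F a)]
  {q : ℝ≥0∞} [Fact (1 ≤ q)]

lemma norm_sum_lp_single_le (hq : q ≠ ⊤) {v : ∀ a, F a} (hv : ∀ a, ‖v a‖ ≤ 1)
    (s : Finset α) : ‖∑ a ∈ s, lp.single q a (v a)‖ ≤ (#s : ℝ) ^ q.toReal⁻¹ := by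
  have ht := toReal_pos_of_ne_top hq
  rw [← Real.rpow_le_rpow_iff (norm_nonneg _) (by positivity) ht,
    ← Real.rpow_mul (Nat.cast_nonneg _), inv_mul_cancel₀ ht.ne', Real.rpow_one,
    lp.norm_sum_single ht]
  calc ∑ a ∈ s, ‖v a‖ ^ q.toReal ≤ ∑ _a ∈ s, (1 : ℝ) :=
        sum_le_sum fun a _ => Real.rpow_le_one (norm_nonneg _) (hv a) ht.le
    _ = #s := by simp

/-- In `ℓ^q` with `1 < q`, `n` unit vectors with disjoint supports have norm `n ^ (1/q) = o(n)`. -/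
lemma tendsto_cesaro_lp_single [∀ a, NormedSpace ℂ (F a)] (hq : q ≠ ⊤) (hq1 : 1 < q)
    {v : ∀ a, F a} (hv : ∀ a, ‖v a‖ ≤ 1) {φ : ℕ → α} (hφ : Function.Injective φ) :
    Tendsto (fun n : ℕ => (n⁻¹ : ℝ) • ∑ i ∈ range n, lp.single q (φ i) (v (φ i)))
      atTop (𝓝 0) := by
  have ht1 : 1 < q.toReal := by
    simpa using (ENNReal.toReal_lt_toReal ENNReal.one_ne_top hq).2 hq1
  have hexp : 0 < 1 - q.toReal⁻¹ := sub_pos.2 (inv_lt_one_of_one_lt₀ ht1)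
  refine squeeze_zero_norm' ?_
    ((tendsto_rpow_neg_atTop hexp).comp tendsto_natCast_atTop_atTop)
  filter_upwards [eventually_gt_atTop 0] with n hn
  have hn' : (0 : ℝ) < n := Nat.cast_pos.2 hn
  rw [norm_smul, ← sum_image (f := fun a => lp.single q a (v a)) fun i _ j _ h => hφ h,
    Function.comp_apply, show -(1 - q.toReal⁻¹) = q.toReal⁻¹ - 1 by ring, Real.rpow_sub_one hn'.ne',
    Real.norm_of_nonneg (by positivity), div_eq_inv_mul]
  refine mul_le_mul_of_nonneg_left ?_ (by positivity)
  simpa [card_image_of_injective _ hφ] using norm_sum_lp_single_le hq hv ((range n).image φ)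

end Singles

namespace Paper

section Blocks

variable {E : ℕ → Type*} [∀ i, NormedAddCommGroup (E i)] [∀ i, NormedSpace ℂ (E i)]
  {q : ℝ≥0∞} [Fact (1 ≤ q)]

@[simp] lemma lpProj_apply (i : ℕ) (x : lp E q) : lpProj q i x = x i := rfl

@[simp] lemma lpIncl_apply (hq : q ≠ ⊤) (i : ℕ) (v : E i) :
    lpIncl q hq i v = lp.single q i v := rfl

lemma norm_lpProj_le (i : ℕ) : ‖(lpProj q i : lp E q →L[ℂ] E i)‖ ≤ 1 :=
  LinearMap.mkContinuous_norm_le _ zero_le_one _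

lemma norm_lpIncl_le (hq : q ≠ ⊤) (i : ℕ) : ‖(lpIncl q hq i : E i →L[ℂ] lp E q)‖ ≤ 1 :=
  LinearMap.mkContinuous_norm_le _ zero_le_one _

def lpBlock (hq : q ≠ ⊤) (S : lp E q →L[ℂ] lp E q) (i j : ℕ) : E j →L[ℂ] E i :=
  (lpProj q i).comp (S.comp (lpIncl q hq j))

lemma norm_lpBlock_le (hq : q ≠ ⊤) (S : lp E q →L[ℂ] lp E q) (i j : ℕ) :
    ‖lpBlock hq S i j‖ ≤ ‖S.comp (lpIncl q hq j)‖ :=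
  (ContinuousLinearMap.opNorm_comp_le _ _).trans
    (mul_le_of_le_one_left (norm_nonneg _) (norm_lpProj_le i))

def IsBanded (hq : q ≠ ⊤) (m : ℕ) (S : lp E q →L[ℂ] lp E q) : Prop :=
  ∀ i j : ℕ, (m : ℤ) < |(i : ℤ) - (j : ℤ)| → lpBlock hq S i j = 0

namespace IsBanded

variable {hq : q ≠ ⊤} {m : ℕ} {S : lp E q →L[ℂ] lp E q}

lemma apply_eq_sum (hS : IsBanded hq m S) (x : lp E q) (i : ℕ) :
    S x i = ∑ j ∈ Icc (i - m) (i + m), lpBlock hq S i j (x j) := by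
  have h := ((lp.hasSum_single hq x).mapL S).mapL (lpProj q i)
  refine h.unique (hasSum_sum_of_ne_finset_zero fun j hj => ?_)
  have hij : (m : ℤ) < |(i : ℤ) - (j : ℤ)| := by
    rw [mem_Icc] at hj
    rw [lt_abs]
    omega
  show lpBlock hq S i j (x j) = 0
  rw [hS i j hij]
  rfl

lemma norm_apply_le (hS : IsBanded hq m S) {C : ℝ} (hC : ∀ i j, ‖lpBlock hq S i j‖ ≤ C)
    (x : lp E q) (i : ℕ) : ‖S x i‖ ≤ C * ∑ j ∈ Icc (i - m) (i + m), ‖x j‖ := by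
  rw [hS.apply_eq_sum, mul_sum]
  exact (norm_sum_le _ _).trans (sum_le_sum fun j _ =>
    ((lpBlock hq S i j).le_opNorm _).trans (mul_le_mul_of_nonneg_right (hC i j) (norm_nonneg _)))

end IsBanded

end Blocks

section BandedNorm

variable {E : ℕ → Type*} [∀ i, NormedAddCommGroup (E i)] [∀ i, NormedSpace ℂ (E i)]
  {q : ℝ≥0∞} [Fact (1 ≤ q)] {hq : q ≠ ⊤} {m : ℕ} {S : lp E q →L[ℂ] lp E q}

/-- Hölder's inequality on each window of `2m+1` indices. -/
theorem IsBanded.norm_le (hS : IsBanded hq m S) {C : ℝ} (hC0 : 0 ≤ C)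
    (hC : ∀ i j, ‖lpBlock hq S i j‖ ≤ C) : ‖S‖ ≤ (2 * m + 1) * C := by
  set t := q.toReal
  have ht1 : 1 ≤ t := one_le_toReal_of_ne_top hq
  have ht : 0 < t := toReal_pos_of_ne_top hq
  have hm : (0 : ℝ) ≤ 2 * m + 1 := by positivity
  refine S.opNorm_le_bound (by positivity) fun x => ?_
  refine lp.norm_le_of_forall_sum_le ht (by positivity) fun F => ?_
  calc ∑ i ∈ F, ‖S x i‖ ^ t
      ≤ ∑ i ∈ F, C ^ t * (∑ j ∈ Icc (i - m) (i + m), ‖x j‖) ^ t := by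
        refine sum_le_sum fun i _ => ?_
        rw [← Real.mul_rpow hC0 (by positivity)]
        exact Real.rpow_le_rpow (norm_nonneg _) (hS.norm_apply_le hC x i) ht.le
    _ ≤ ∑ i ∈ F, C ^ t * ((2 * m + 1) ^ (t - 1) * ∑ j ∈ Icc (i - m) (i + m), ‖x j‖ ^ t) := by
        refine sum_le_sum fun i _ => mul_le_mul_of_nonneg_left ?_ (by positivity)
        refine (Real.rpow_sum_le_const_mul_sum_rpow_of_nonneg _ ht1
          fun j _ => norm_nonneg _).trans ?_
        refine mul_le_mul_of_nonneg_right ?_ (sum_nonneg fun j _ => by positivity)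
        exact Real.rpow_le_rpow (Nat.cast_nonneg _)
          (by exact_mod_cast card_Icc_sub_add_le i m) (by linarith)
    _ = C ^ t * (2 * m + 1) ^ (t - 1) *
          ∑ i ∈ F, ∑ j ∈ Icc (i - m) (i + m), ‖x j‖ ^ t := by
        rw [mul_sum]
        exact sum_congr rfl fun i _ => by ring
    _ ≤ C ^ t * (2 * m + 1) ^ (t - 1) * ((2 * m + 1) * ‖x‖ ^ t) := by
        refine mul_le_mul_of_nonneg_left ?_ (by positivity)
        refine (sum_sum_Icc_sub_add_le (fun j => by positivity) F m).trans ?_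
        exact mul_le_mul_of_nonneg_left (lp.sum_rpow_le_norm_rpow ht x _) hm
    _ = ((2 * m + 1) * C * ‖x‖) ^ t := by
        rw [Real.mul_rpow (by positivity) (norm_nonneg _), Real.mul_rpow hm hC0,
          Real.rpow_sub_one (by positivity)]
        field_simp

end BandedNorm

section EssNorm

variable {X Y : Type*} [NormedAddCommGroup X] [NormedSpace ℂ X]
  [NormedAddCommGroup Y] [NormedSpace ℂ Y]

lemma essNorm_nonneg (T : X →L[ℂ] Y) : 0 ≤ essNorm T := by
  unfold essNorm
  exact Real.iInf_nonneg fun K => norm_nonneg (T - K.1)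

lemma essNorm_le_norm_sub (T : X →L[ℂ] Y) {K : X →L[ℂ] Y} (hK : IsCompactOperator K) :
    essNorm T ≤ ‖T - K‖ := by
  have hbdd : BddBelow (Set.range
      fun K : {K : X →L[ℂ] Y // IsCompactOperator K} => ‖T - (K : X →L[ℂ] Y)‖) :=
    ⟨0, by rintro _ ⟨K, rfl⟩; exact norm_nonneg _⟩
  exact ciInf_le hbdd ⟨K, hK⟩

lemma exists_isCompactOperator_norm_sub_lt (T : X →L[ℂ] Y) {c : ℝ} (hc : essNorm T < c) :
    ∃ K : X →L[ℂ] Y, IsCompactOperator K ∧ ‖T - K‖ < c := by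
  have : Nonempty {K : X →L[ℂ] Y // IsCompactOperator K} := ⟨⟨0, isCompactOperator_zero⟩⟩
  obtain ⟨⟨K, hK⟩, hlt⟩ := exists_lt_of_ciInf_lt hc
  exact ⟨K, hK, hlt⟩

end EssNorm

section Truncation

variable {E : ℕ → Type*} [∀ i, NormedAddCommGroup (E i)] [∀ i, NormedSpace ℂ (E i)]
  {q : ℝ≥0∞} [Fact (1 ≤ q)] (hq : q ≠ ⊤)

def lpTrunc (N : ℕ) : lp E q →L[ℂ] lp E q :=
  ∑ j ∈ range N, (lpIncl q hq j).comp (lpProj q j)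

lemma isCompactOperator_lpTrunc [∀ i, FiniteDimensional ℂ (E i)] (N : ℕ) :
    IsCompactOperator (lpTrunc hq N : lp E q →L[ℂ] lp E q) := by
  refine (compactOperator (RingHom.id ℂ) (lp E q) (lp E q)).sum_mem fun j _ => ?_
  have hj : IsCompactOperator (lpIncl q hq j : E j →L[ℂ] lp E q) :=
    isCompactOperator_of_locallyCompactSpace_rng _
  exact hj.comp_clm (lpProj q j)

lemma lpTrunc_comp_lpIncl (N j : ℕ) :
    (lpTrunc hq N).comp (lpIncl q hq j) =
      if j < N then lpIncl q hq j else (0 : E j →L[ℂ] lp E q) := by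
  ext v : 1
  have hsingle : ∀ k ≠ j, lp.single q k ((lp.single q j v : ∀ i, E i) k) = 0 := fun k hk => by
    rw [lp.single_apply_ne q j v hk, lp.single_zero]
  simp only [lpTrunc, ContinuousLinearMap.comp_apply, _root_.sum_apply,
    lpProj_apply, lpIncl_apply]
  split_ifs with h
  · rw [sum_eq_single_of_mem j (mem_range.2 h) fun k _ hk => hsingle k hk, lp.single_apply_self]
    rfl
  · exact sum_eq_zero fun k hk => hsingle k (by rintro rfl; exact h (mem_range.1 hk))

end Truncation

section Tail

variable {E : ℕ → Type*} [∀ i, NormedAddCommGroup (E i)] [∀ i, NormedSpace ℂ (E i)]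
  {q : ℝ≥0∞} [Fact (1 ≤ q)] {hq : q ≠ ⊤}

lemma lpBlock_sub_comp_lpTrunc (S : lp E q →L[ℂ] lp E q) (N i j : ℕ) :
    lpBlock hq (S - S.comp (lpTrunc hq N)) i j = if j < N then 0 else lpBlock hq S i j := by
  simp only [lpBlock, ContinuousLinearMap.sub_comp, ContinuousLinearMap.comp_assoc,
    lpTrunc_comp_lpIncl]
  split_ifs <;> simp

theorem IsBanded.essNorm_le [∀ i, FiniteDimensional ℂ (E i)] {m : ℕ}
    {S : lp E q →L[ℂ] lp E q} (hS : IsBanded hq m S) {C : ℝ} (hC0 : 0 ≤ C) (N : ℕ)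
    (hC : ∀ i j, N ≤ j → ‖lpBlock hq S i j‖ ≤ C) : essNorm S ≤ (2 * m + 1) * C := by
  have hK : IsCompactOperator (S.comp (lpTrunc hq N)) :=
    (isCompactOperator_lpTrunc hq N).clm_comp S
  refine (essNorm_le_norm_sub S hK).trans ?_
  refine IsBanded.norm_le (hq := hq) (fun i j hij => ?_) hC0 fun i j => ?_
  all_goals rw [lpBlock_sub_comp_lpTrunc]; split_ifs with hj
  · rfl
  · exact hS i j hij
  · simpa using hC0
  · exact hC i j (not_lt.1 hj)

end Tail

section CompactOnLp

variable {E : ℕ → Type*} [∀ i, NormedAddCommGroup (E i)] [∀ i, NormedSpace ℂ (E i)]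
  {q : ℝ≥0∞} [Fact (1 ≤ q)] (hq : q ≠ ⊤)

theorem tendsto_norm_comp_lpIncl_of_isCompactOperator {Y : Type*} [NormedAddCommGroup Y]
    [NormedSpace ℂ Y] (hq1 : 1 < q) {K : lp E q →L[ℂ] Y} (hK : IsCompactOperator K) :
    Tendsto (fun j => ‖K.comp (lpIncl q hq j)‖) atTop (𝓝 0) := by
  choose v hv hKv using fun j => exists_norm_le_one_opNorm_le_two_mul (K.comp (lpIncl q hq j))
  have hq0 : 0 < q := zero_lt_one.trans hq1
  have hKu : Tendsto (fun j => K (lp.single q j (v j))) atTop (𝓝 0) :=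
    hK.tendsto_zero_of_cesaro (fun j => (lp.norm_single hq0 j (v j)).le.trans (hv j))
      fun φ hφ => tendsto_cesaro_lp_single hq hq1 hv hφ.injective
  refine squeeze_zero (fun j => norm_nonneg _) hKv ?_
  simpa using hKu.norm.const_mul 2

lemma eventually_norm_lpBlock_le (hq1 : 1 < q) (S : lp E q →L[ℂ] lp E q) {c : ℝ}
    (hc : essNorm S < c) : ∀ᶠ j in atTop, ∀ i, ‖lpBlock hq S i j‖ ≤ c := by
  obtain ⟨K, hK, hSK⟩ := exists_isCompactOperator_norm_sub_lt S hc
  filter_upwards [(tendsto_norm_comp_lpIncl_of_isCompactOperator hq hq1 hK).eventually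
    (gt_mem_nhds (sub_pos.2 hSK))] with j hj i
  have hSKj : ‖(S - K).comp (lpIncl q hq j)‖ ≤ ‖S - K‖ :=
    (ContinuousLinearMap.opNorm_comp_le _ _).trans
      (mul_le_of_le_one_right (norm_nonneg _) (norm_lpIncl_le hq j))
  calc ‖lpBlock hq S i j‖ ≤ ‖S.comp (lpIncl q hq j)‖ := norm_lpBlock_le hq S i j
    _ = ‖(S - K).comp (lpIncl q hq j) + K.comp (lpIncl q hq j)‖ := by
        rw [ContinuousLinearMap.sub_comp, sub_add_cancel]
    _ ≤ c := (norm_add_le _ _).trans (by linarith)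

end CompactOnLp

theorem IsBanded.essNorm_le_mul_essNorm_of_lpBlock_eq {E : ℕ → Type*}
    [∀ i, NormedAddCommGroup (E i)] [∀ i, NormedSpace ℂ (E i)] [∀ i, FiniteDimensional ℂ (E i)]
    {q q' : ℝ≥0∞} [Fact (1 ≤ q)] [Fact (1 ≤ q')] {hq : q ≠ ⊤} (hq' : q' ≠ ⊤) (hq'1 : 1 < q')
    {m : ℕ} {S : lp E q →L[ℂ] lp E q} {S' : lp E q' →L[ℂ] lp E q'} (hS : IsBanded hq m S)
    (hSS' : ∀ i j, lpBlock hq S i j = lpBlock hq' S' i j) :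
    essNorm S ≤ (2 * m + 1) * essNorm S' := by
  have hm : (0 : ℝ) < 2 * m + 1 := by positivity
  rw [← div_le_iff₀' hm]
  refine le_of_forall_gt_imp_ge_of_dense fun c hc => ?_
  obtain ⟨N, hN⟩ := (eventually_norm_lpBlock_le hq' hq'1 S' hc).exists_forall_of_atTop
  rw [div_le_iff₀' hm]
  exact hS.essNorm_le ((essNorm_nonneg S').trans hc.le) N fun i j hj => hSS' i j ▸ hN j hj i

theorem statement_6 (p : ℝ≥0∞) [Fact (1 ≤ p)] (hp1 : 1 < p) (hp2 : p ≠ ⊤)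
    (E : ℕ → Type*) [∀ k, NormedAddCommGroup (E k)] [∀ k, InnerProductSpace ℂ (E k)]
    [∀ k, FiniteDimensional ℂ (E k)]
    (W : ℕ → Set (lp E 2 →L[ℂ] lp E 2))
    (hW : ∀ m, W m = {T | ∀ k j : ℕ, (m : ℤ) < |(k : ℤ) - (j : ℤ)| →
      (lpProj 2 k).comp (T.comp (lpIncl 2 ENNReal.ofNat_ne_top j)) = 0})
    (Ψ : (lp E 2 →L[ℂ] lp E 2) → (lp E p →L[ℂ] lp E p))
    -- `Ψ T` is the operator on `Xₚ` with the same block matrix as `T`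
    (hΨ : ∀ T ∈ ⋃ m, W m, ∀ i j : ℕ,
      (lpProj p i).comp ((Ψ T).comp (lpIncl p hp2 j)) =
        (lpProj 2 i).comp (T.comp (lpIncl 2 ENNReal.ofNat_ne_top j))) :
    ∀ m : ℕ, ∀ T ∈ W m,
      (1 / (2 * (m : ℝ) + 1)) * essNorm T ≤ essNorm (Ψ T) ∧
      essNorm (Ψ T) ≤ (2 * (m : ℝ) + 1) * essNorm T := by
  intro m T hT
  have hΨT : ∀ i j, lpBlock ENNReal.ofNat_ne_top T i j = lpBlock hp2 (Ψ T) i j :=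
    fun i j => (hΨ T (Set.mem_iUnion.2 ⟨m, hT⟩) i j).symm
  rw [hW] at hT
  have hT' : IsBanded ENNReal.ofNat_ne_top m T := hT
  have hΨT' : IsBanded hp2 m (Ψ T) := fun i j hij => hΨT i j ▸ hT' i j hij
  refine ⟨?_, hΨT'.essNorm_le_mul_essNorm_of_lpBlock_eq _ ENNReal.one_lt_two
    fun i j => (hΨT i j).symm⟩
  rw [one_div_mul_eq_div, div_le_iff₀' (by positivity)]
  exact hT'.essNorm_le_mul_essNorm_of_lpBlock_eq hp2 hp1 hΨT

end Paper
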